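/- Let σ > 0, λ > 0, μ ∈ ℝ, and Y = μ + W with W ~ N(0,σ²). Then Cov(Y, HT(Y,λ)) = σ²·P(|Y| > λ) + λ·E[sign(Y)·W·1{|Y| > λ}], where HT(y,λ) = 0 if |y| < λ and HT(y,λ) = y otherwise, and sign is the sign function. -/

import Mathlib

open MeasureTheory ProbabilityTheory Filter Real

/-- Scalar hard thresholding at threshold `lam`. -/
noncomputable def HT (lam y : ℝ) : ℝ := if |y| < lam then 0 else y

/-- Covariance of two real random variables. -/
noncomputable def cov {Ω : Type*} [MeasurableSpace Ω] (μ : Measure Ω) (X Y : Ω → ℝ) : ℝ :=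
  ∫ ω, (X ω - ∫ x, X x ∂μ) * (Y ω - ∫ x, Y x ∂μ) ∂μ

/-!
Write `Y = μ₀ + W`, so `Y ~ N(μ₀, σ²)`. Since `E W = 0`, `Cov(Y, HT(Y)) = E[W · HT(Y)]`, and off the
null event `|Y| = λ` we have `W · HT(Y) = W · ST(Y) + λ · sign(Y) · W · 1{|Y| > λ}`, where
`ST(y) = sign y · (|y| - λ)⁺` is soft thresholding. `ST` is Lipschitz with derivative `1{|y| > λ}`,
so Stein's identity `E[W g(Y)] = σ² E[g'(Y)]` gives `E[W · ST(Y)] = σ² P(|Y| > λ)`. It suffices to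
check Stein's identity for the hinge `(y - a)⁺`, where it is one integration by parts against the
Gaussian density, and, by reflection, for `(b - y)⁺`.
-/

open Set
open scoped NNReal Topology

lemma Real.measurable_sign : Measurable Real.sign :=
  Measurable.ite measurableSet_Iio measurable_const
    (Measurable.ite measurableSet_Ioi measurable_const measurable_const)

lemma measurable_HT (lam : ℝ) : Measurable (HT lam) :=
  Measurable.ite (measurableSet_lt measurable_abs measurable_const) measurable_const measurable_id

lemma abs_HT_le (lam y : ℝ) : |HT lam y| ≤ |y| := by
  unfold HT
  split_ifs <;> simp

/-- Soft thresholding `sign y · (|y| - λ)⁺`, written as a difference of two hinges. -/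
noncomputable def softThreshold (lam y : ℝ) : ℝ := max (y - lam) 0 - max (-lam - y) 0

lemma mul_HT_eq_mul_softThreshold_add {lam y : ℝ} (hlam : 0 ≤ lam) (hy : |y| ≠ lam) (z : ℝ) :
    z * HT lam y
      = z * softThreshold lam y + lam * (if lam < |y| then Real.sign y * z else 0) := by
  unfold HT softThreshold
  rcases hy.lt_or_gt with hlt | hgt
  · obtain ⟨hlower, hupper⟩ := abs_lt.1 hlt
    rw [if_pos hlt, if_neg (not_lt.2 hlt.le), max_eq_right (by linarith),
      max_eq_right (by linarith)]
    ring
  · rw [if_neg (not_lt.2 hgt.le), if_pos hgt]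
    rcases lt_abs.1 hgt with hpos | hneg
    · rw [Real.sign_of_pos (by linarith), max_eq_left (by linarith), max_eq_right (by linarith)]
      ring
    · rw [Real.sign_of_neg (by linarith), max_eq_right (by linarith), max_eq_left (by linarith)]
      ring

lemma covariance_eq_integral_sub_mul {Ω : Type*} [MeasurableSpace Ω] {μ : Measure Ω}
    [IsProbabilityMeasure μ] {X Y : Ω → ℝ} (hX : Integrable X μ)
    (hXY : Integrable (fun ω => (X ω - μ[X]) * Y ω) μ) :
    cov[X, Y; μ] = ∫ ω, (X ω - μ[X]) * Y ω ∂μ := by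
  have hcentered : ∫ ω, (X ω - μ[X]) ∂μ = 0 := by
    rw [integral_sub hX (integrable_const _), integral_const]
    simp
  calc cov[X, Y; μ] = ∫ ω, ((X ω - μ[X]) * Y ω - μ[Y] * (X ω - μ[X])) ∂μ := by
        unfold covariance
        congr 1 with ω
        ring
    _ = ∫ ω, (X ω - μ[X]) * Y ω ∂μ := by
        have hmeanTerm : Integrable (fun ω => μ[Y] * (X ω - μ[X])) μ :=
          (hX.sub (integrable_const _)).const_mul _
        rw [integral_sub hXY hmeanTerm, integral_const_mul,
          hcentered, mul_zero, sub_zero]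

lemma MeasureTheory.MemLp.max_zero {α : Type*} [MeasurableSpace α] {μ : Measure α}
    {p : ENNReal} {f : α → ℝ} (hf : MemLp f p μ) : MemLp (fun x => max (f x) 0) p μ := by
  refine hf.mono (hf.aestronglyMeasurable.sup aestronglyMeasurable_const) (ae_of_all _ fun x => ?_)
  rw [Real.norm_eq_abs, Real.norm_eq_abs, abs_of_nonneg (le_max_right _ _)]
  exact max_le (le_abs_self _) (abs_nonneg _)

section GaussianReal

lemma hasDerivAt_gaussianPDFReal (μ : ℝ) (v : ℝ≥0) (x : ℝ) :
    HasDerivAt (gaussianPDFReal μ v) (-((x - μ) / v) * gaussianPDFReal μ v x) x := by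
  have hexponent : HasDerivAt (fun x => -(x - μ) ^ 2 / (2 * (v : ℝ))) (-((x - μ) / v)) x := by
    refine ((((hasDerivAt_id' x).sub_const μ).fun_pow 2).neg.div_const _).congr_deriv ?_
    ring
  refine (hexponent.exp.const_mul (√(2 * π * v))⁻¹).congr_deriv ?_
  rw [gaussianPDFReal]
  ring

variable {μ : ℝ} {v : ℝ≥0}

lemma integrable_gaussianReal_iff (hv : v ≠ 0) {f : ℝ → ℝ} :
    Integrable f (gaussianReal μ v) ↔ Integrable (fun x => f x * gaussianPDFReal μ v x) := by
  rw [gaussianReal_of_var_ne_zero _ hv, integrable_withDensity_iff (measurable_gaussianPDF _ _)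
    (ae_of_all _ fun _ => gaussianPDF_lt_top)]
  simp only [toReal_gaussianPDF]

lemma gaussianReal_real_apply (hv : v ≠ 0) (s : Set ℝ) :
    (gaussianReal μ v).real s = ∫ x in s, gaussianPDFReal μ v x := by
  rw [measureReal_def, gaussianReal_apply_eq_integral _ hv,
    ENNReal.toReal_ofReal (integral_nonneg fun x => gaussianPDFReal_nonneg _ _ x)]

lemma memLp_sub_const_gaussianReal (c : ℝ) : MemLp (fun x => x - c) 2 (gaussianReal μ v) :=
  (memLp_id_gaussianReal 2).sub (memLp_const c)

lemma memLp_const_sub_gaussianReal (c : ℝ) : MemLp (fun x => c - x) 2 (gaussianReal μ v) :=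
  (memLp_const c).sub (memLp_id_gaussianReal 2)

lemma setIntegral_Ioi_sub_mul_sub_mul_gaussianPDFReal (hv : v ≠ 0) (a : ℝ) :
    ∫ x in Ioi a, (x - μ) * (x - a) * gaussianPDFReal μ v x
      = v * ∫ x in Ioi a, gaussianPDFReal μ v x := by
  set φ := gaussianPDFReal μ v
  have hderiv (x : ℝ) :
      HasDerivAt (fun x => (x - a) * φ x) (φ x - (x - μ) * (x - a) * φ x / v) x := by
    refine (((hasDerivAt_id' x).sub_const a).mul (hasDerivAt_gaussianPDFReal μ v x)).congr_deriv ?_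
    ring
  have hquadratic : Integrable (fun x => (x - μ) * (x - a) * φ x) :=
    (integrable_gaussianReal_iff hv).1
      ((memLp_sub_const_gaussianReal μ).integrable_mul (memLp_sub_const_gaussianReal a))
  have hderivInt : Integrable (fun x => φ x - (x - μ) * (x - a) * φ x / v) :=
    (integrable_gaussianPDFReal μ v).sub (hquadratic.div_const _)
  have hlim : Tendsto (fun x => (x - a) * φ x) atTop (𝓝 0) :=
    tendsto_zero_of_hasDerivAt_of_integrableOn_Ioi (a := a) (fun x _ => hderiv x)
      hderivInt.integrableOn ((integrable_gaussianReal_iff hv).1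
        ((memLp_sub_const_gaussianReal a).integrable one_le_two)).integrableOn
  have hFTC := integral_Ioi_of_hasDerivAt_of_tendsto' (a := a) (fun x _ => hderiv x)
    hderivInt.integrableOn hlim
  rw [integral_sub (integrable_gaussianPDFReal μ v).integrableOn
      (hquadratic.div_const _).integrableOn,
    integral_div, sub_self, zero_mul, sub_zero] at hFTC
  have hv' : (v : ℝ) ≠ 0 := by exact_mod_cast hv
  field_simp at hFTC
  linarith

lemma integral_sub_mul_max_sub_gaussianReal (hv : v ≠ 0) (a : ℝ) :
    ∫ x, (x - μ) * max (x - a) 0 ∂gaussianReal μ v = v * (gaussianReal μ v).real (Ioi a) := by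
  have hindicator : (fun x => gaussianPDFReal μ v x • ((x - μ) * max (x - a) 0))
      = (Ioi a).indicator (fun x => (x - μ) * (x - a) * gaussianPDFReal μ v x) := by
    ext x
    by_cases hx : x ∈ Ioi a
    · rw [indicator_of_mem hx, max_eq_left (sub_nonneg.2 (le_of_lt hx)), smul_eq_mul]
      ring
    · rw [indicator_of_notMem hx, max_eq_right (sub_nonpos.2 (not_lt.1 hx)), mul_zero, smul_zero]
  rw [integral_gaussianReal_eq_integral_smul hv, hindicator, integral_indicator measurableSet_Ioi,
    setIntegral_Ioi_sub_mul_sub_mul_gaussianPDFReal hv, gaussianReal_real_apply hv]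

lemma integral_sub_mul_max_sub_left_gaussianReal (hv : v ≠ 0) (b : ℝ) :
    ∫ x, (x - μ) * max (b - x) 0 ∂gaussianReal μ v = -(v * (gaussianReal μ v).real (Iio b)) := by
  have hreflect : (gaussianReal (-μ) v).map (fun x => -x) = gaussianReal μ v := by
    simpa using gaussianReal_map_neg (μ := -μ) (v := v)
  have hpreimage : (fun x : ℝ => -x) ⁻¹' Iio b = Ioi (-b) := by
    ext x
    simp
  rw [← hreflect, integral_map (by fun_prop) (by fun_prop),
    map_measureReal_apply (by fun_prop) measurableSet_Iio, hpreimage,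
    ← integral_sub_mul_max_sub_gaussianReal hv, ← integral_neg]
  congr 1 with x
  rw [show b - -x = x - -b by ring]
  ring

lemma integral_sub_mul_softThreshold_gaussianReal (hv : v ≠ 0) {lam : ℝ} (hlam : 0 ≤ lam) :
    ∫ x, (x - μ) * softThreshold lam x ∂gaussianReal μ v
      = v * (gaussianReal μ v).real {x | lam < |x|} := by
  have hcentered : MemLp (fun x => x - μ) 2 (gaussianReal μ v) := memLp_sub_const_gaussianReal μ
  have hright : Integrable (fun x => (x - μ) * max (x - lam) 0) (gaussianReal μ v) :=
    hcentered.integrable_mul (memLp_sub_const_gaussianReal lam).max_zero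
  have hleft : Integrable (fun x => (x - μ) * max (-lam - x) 0) (gaussianReal μ v) :=
    hcentered.integrable_mul (memLp_const_sub_gaussianReal (-lam)).max_zero
  have hsplit : {x : ℝ | lam < |x|} = Iio (-lam) ∪ Ioi lam := by
    ext x
    simp [lt_abs, or_comm, lt_neg]
  have hdisjoint : Disjoint (Iio (-lam)) (Ioi lam) := Iio_disjoint_Ioi_of_le (by linarith)
  simp_rw [softThreshold, mul_sub]
  rw [integral_sub hright hleft, integral_sub_mul_max_sub_gaussianReal hv,
    integral_sub_mul_max_sub_left_gaussianReal hv, hsplit,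
    measureReal_union hdisjoint measurableSet_Ioi]
  ring

lemma measurable_ite_lt_abs_sign_mul_sub (lam c : ℝ) :
    Measurable (fun y => if lam < |y| then Real.sign y * (y - c) else 0) :=
  Measurable.ite (measurableSet_lt measurable_const measurable_abs)
    (Real.measurable_sign.mul (measurable_id.sub_const c)) measurable_const

theorem covariance_HT_gaussianReal (hv : v ≠ 0) {lam : ℝ} (hlam : 0 ≤ lam) :
    cov[fun y => y, HT lam; gaussianReal μ v]
      = v * (gaussianReal μ v).real {y | lam < |y|}
        + lam * ∫ y, (if lam < |y| then Real.sign y * (y - μ) else 0) ∂gaussianReal μ v := by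
  have hcentered : MemLp (fun y => y - μ) 2 (gaussianReal μ v) := memLp_sub_const_gaussianReal μ
  have hHT : MemLp (HT lam) 2 (gaussianReal μ v) :=
    (memLp_id_gaussianReal 2).mono (measurable_HT lam).aestronglyMeasurable
      (ae_of_all _ fun y => abs_HT_le lam y)
  have hsoft : Integrable (fun y => (y - μ) * softThreshold lam y) (gaussianReal μ v) :=
    hcentered.integrable_mul ((memLp_sub_const_gaussianReal lam).max_zero.sub
      (memLp_const_sub_gaussianReal (-lam)).max_zero)
  have hsign : Integrable (fun y => if lam < |y| then Real.sign y * (y - μ) else 0)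
      (gaussianReal μ v) := by
    refine (hcentered.integrable one_le_two).mono
      (measurable_ite_lt_abs_sign_mul_sub lam μ).aestronglyMeasurable (ae_of_all _ fun y => ?_)
    split_ifs
    · rw [norm_mul]
      refine mul_le_of_le_one_left (norm_nonneg _) ?_
      rcases Real.sign_apply_eq y with h | h | h <;> simp [h]
    · simp
  have hnot_at_threshold : ∀ᵐ y ∂gaussianReal μ v, |y| ≠ lam := by
    have := nullSingletonClass_gaussianReal (μ := μ) hv
    refine measure_mono_null (fun y hy => ?_) ((toFinite {lam, -lam}).measure_zero _)
    rcases (abs_eq hlam).1 (not_not.1 hy) with h | h <;> simp [h]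
  rw [covariance_eq_integral_sub_mul (X := fun y => y)
      ((memLp_id_gaussianReal 2).integrable one_le_two)
      (by rw [integral_id_gaussianReal]; exact hcentered.integrable_mul hHT),
    integral_id_gaussianReal,
    integral_congr_ae (hnot_at_threshold.mono fun y hy =>
      mul_HT_eq_mul_softThreshold_add hlam hy (y - μ)),
    integral_add hsoft (hsign.const_mul lam), integral_const_mul,
    integral_sub_mul_softThreshold_gaussianReal hv hlam]

end GaussianReal

theorem cov_hard_thresholding_decomposition_general
    {Ω : Type*} [MeasurableSpace Ω] (μpr : Measure Ω)
    (σ lam μ₀ : ℝ) (hσ : 0 < σ) (hlam : 0 < lam)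
    (W : Ω → ℝ) (hmeas : Measurable W)
    (hdist : Measure.map W μpr = gaussianReal 0 ⟨σ ^ 2, sq_nonneg σ⟩) :
    cov μpr (fun ω => μ₀ + W ω) (fun ω => HT lam (μ₀ + W ω))
      = σ ^ 2 * (μpr {ω | lam < |μ₀ + W ω|}).toReal +
        lam * ∫ ω, (if lam < |μ₀ + W ω| then Real.sign (μ₀ + W ω) * W ω else 0) ∂μpr := by
  have hv : (⟨σ ^ 2, sq_nonneg σ⟩ : ℝ≥0) ≠ 0 :=
    (show (0 : ℝ≥0) < ⟨σ ^ 2, sq_nonneg σ⟩ from pow_pos hσ 2).ne'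
  have hY : HasLaw (fun ω => μ₀ + W ω) (gaussianReal μ₀ ⟨σ ^ 2, sq_nonneg σ⟩) μpr := by
    simpa using gaussianReal_const_add ⟨hmeas.aemeasurable, hdist⟩ μ₀
  have hsign : ∫ ω, (if lam < |μ₀ + W ω| then Real.sign (μ₀ + W ω) * W ω else 0) ∂μpr
      = ∫ y, (if lam < |y| then Real.sign y * (y - μ₀) else 0)
          ∂gaussianReal μ₀ ⟨σ ^ 2, sq_nonneg σ⟩ := by
    rw [← hY.integral_comp (measurable_ite_lt_abs_sign_mul_sub lam μ₀).aestronglyMeasurable]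
    simp
  calc cov μpr (fun ω => μ₀ + W ω) (fun ω => HT lam (μ₀ + W ω))
      = cov[fun y => y, HT lam; gaussianReal μ₀ ⟨σ ^ 2, sq_nonneg σ⟩] :=
        hY.covariance_fun_comp (f := fun y => y) aemeasurable_id (measurable_HT lam).aemeasurable
    _ = _ := covariance_HT_gaussianReal hv hlam.le
    _ = _ := by
        rw [← measureReal_def, hY.measureReal_eq (p := fun y => lam < |y|)
          (measurableSet_lt measurable_const measurable_abs), hsign]
        rfl

/-- `Cov(Y, HT(Y,λ)) = σ²·P(|Y| > λ) + λ·E[sign(Y)·W·1{|Y| > λ}]`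
for `Y = μ₀ + W`, `W ~ N(0, σ²)`. -/
theorem cov_hard_thresholding_decomposition
    {Ω : Type*} [MeasurableSpace Ω] (μpr : Measure Ω) [IsProbabilityMeasure μpr]
    (σ lam μ₀ : ℝ) (hσ : 0 < σ) (hlam : 0 < lam)
    (W : Ω → ℝ) (hmeas : Measurable W)
    (hdist : Measure.map W μpr = gaussianReal 0 ⟨σ ^ 2, sq_nonneg σ⟩) :
    cov μpr (fun ω => μ₀ + W ω) (fun ω => HT lam (μ₀ + W ω))
      = σ ^ 2 * (μpr {ω | lam < |μ₀ + W ω|}).toReal +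
        lam * ∫ ω, (if lam < |μ₀ + W ω| then Real.sign (μ₀ + W ω) * W ω else 0) ∂μpr :=
  cov_hard_thresholding_decomposition_general μpr σ lam μ₀ hσ hlam W hmeas hdist
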